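/- arXiv:0804.0440 — 5 statements merged into one kernel-verified Lean document; each statement's English description precedes it below -/
import Mathlib

section
/- (First Identity) For every natural number n, the following identity of polynomials in ℚ[x] holds: (x−2)·x·(x+2)·(3x+2)·a_n'(x) = 2n(x−1)·a_{n+2}(x) + (n(x−6)(x−2) + 3x² − 2x + 4)·a_{n+1}(x) − (3x³ + 18x² − 20x + 24 + 4n(x²+4))·a_n(x) + 8(x−1)²·c_n(x) − 32(x−1)²·c_{n−1}(x), where a_n' denotes the formal derivative of a_n. -/
/-!
Let `C = ∑ catalan n tⁿ`, so that `t C² = C - 1`. In `ℚ[x]⟦t⟧` the generating function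
`A = ∑ a_n tⁿ` is `C⁴ / ((2 - C) (C + x - x C))`: Pascal's rule gives `(x - 1 - x² t) A = x B₁ - B₂`
for `B_r = ∑ C(2n+r, n) tⁿ`, and `(1 - 4t) B₁`, `t (1 - 4t) B₂` are linear in `C`.
Differentiating the closed form in `x` (coefficientwise) and in `t` expresses `∑ a_n' tⁿ` and
`∑ n a_n tⁿ` rationally in `C` and `x`, while `∑ c_n tⁿ = A²`. After the substitution
`t = (C - 1) / C²` the generating-function form of the identity is an identity of rational functions
of `C` and `x`; its coefficient of `t^(n+2)` is the theorem.
-/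

open Polynomial

/-- `a k` is the polynomial `∑_{m=0}^{k} C(2k+2-m, k-m) xᵐ`. -/
noncomputable def a (k : ℕ) : ℚ[X] :=
  ∑ m ∈ Finset.range (k + 1), C (((2 * k + 2 - m).choose (k - m) : ℚ)) * X ^ m

/-- The convolution polynomials `c_n = ∑_{k=0}^n a_k a_{n-k}`, indexed by `ℤ`
with the convention `c_n = 0` for `n < 0`. -/
noncomputable def c (n : ℤ) : ℚ[X] :=
  if 0 ≤ n then ∑ k ∈ Finset.range (n.toNat + 1), a k * a (n.toNat - k) else 0

open scoped PowerSeries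

theorem Derivation.map_ofNat {A R : Type*} [CommSemiring A] [CommRing R] [Algebra A R]
    (D : Derivation A R R) (n : ℕ) [n.AtLeastTwo] : D (no_index (OfNat.ofNat n)) = 0 :=
  D.map_natCast n

noncomputable def Derivation.mapPowerSeries {A R : Type*} [CommSemiring A] [CommRing R]
    [Algebra A R] (d : Derivation A R R) : Derivation A R⟦X⟧ R⟦X⟧ :=
  Derivation.mk'
    { toFun := fun f => PowerSeries.mk fun n => d (PowerSeries.coeff n f)
      map_add' := fun f g => by ext n; simp
      map_smul' := fun r f => by ext n; simp }
    fun f g => by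
      rw [smul_eq_mul, smul_eq_mul, mul_comm g]
      ext n
      simp only [LinearMap.coe_mk, AddHom.coe_mk, PowerSeries.coeff_mk, map_add,
        PowerSeries.coeff_mul, map_sum, Derivation.leibniz, smul_eq_mul, Finset.sum_add_distrib]
      simp only [mul_comm (PowerSeries.coeff _ g)]

@[simp]
theorem Derivation.coeff_mapPowerSeries {A R : Type*} [CommSemiring A] [CommRing R] [Algebra A R]
    (d : Derivation A R R) (f : R⟦X⟧) (n : ℕ) :
    PowerSeries.coeff n (d.mapPowerSeries f) = d (PowerSeries.coeff n f) := by
  simp [Derivation.mapPowerSeries]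

theorem PowerSeries.coeff_X_mul_derivative {R : Type*} [CommSemiring R] (f : R⟦X⟧) (n : ℕ) :
    coeff n (X * d⁄dX R f) = n * coeff n f := by
  cases n with
  | zero => simp
  | succ n => rw [coeff_succ_X_mul, coeff_derivative, mul_comm]; push_cast; rfl

namespace Nat

theorem two_mul_choose_two_mul_add_one (n : ℕ) :
    2 * (2 * n + 1).choose n = centralBinom (n + 1) := by
  rw [centralBinom_eq_two_mul_choose, show 2 * (n + 1) = 2 * n + 1 + 1 by ring,
    choose_succ_succ', choose_symm_half, two_mul]

theorem add_two_mul_choose_two_mul_add_two (n : ℕ) :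
    (n + 2) * (2 * n + 2).choose n = (n + 1) * centralBinom (n + 1) := by
  have h := choose_succ_right_eq (2 * n + 2) n
  rw [show 2 * n + 2 - n = n + 2 by omega] at h
  rw [centralBinom_eq_two_mul_choose, show 2 * (n + 1) = 2 * n + 2 by ring, mul_comm, ← h,
    mul_comm]

theorem choose_two_mul_add_three_add_catalan (n : ℕ) :
    (2 * n + 3).choose (n + 1) + catalan (n + 1) = 4 * (2 * n + 1).choose n := by
  have h1 := two_mul_choose_two_mul_add_one (n + 1)
  have h2 := two_mul_choose_two_mul_add_one n
  have h3 := succ_mul_catalan_eq_centralBinom (n + 1)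
  have h4 := succ_mul_centralBinom_succ (n + 1)
  rw [show 2 * (n + 1) + 1 = 2 * n + 3 by ring] at h1
  qify at h1 h2 h3 h4 ⊢
  apply mul_left_cancel₀ (show (n : ℚ) + 2 ≠ 0 by positivity)
  linear_combination ((n : ℚ) + 2) / 2 * h1 - 2 * ((n : ℚ) + 2) * h2 + h3 + 1 / 2 * h4

theorem choose_two_mul_add_four_add_catalan (n : ℕ) :
    (2 * n + 4).choose (n + 1) + catalan (n + 2) =
      4 * (2 * n + 2).choose n + 2 * catalan (n + 1) := by
  have h1 := add_two_mul_choose_two_mul_add_two (n + 1)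
  have h2 := add_two_mul_choose_two_mul_add_two n
  have h3 := succ_mul_catalan_eq_centralBinom (n + 1)
  have h3' := succ_mul_catalan_eq_centralBinom (n + 2)
  have h4 := succ_mul_centralBinom_succ (n + 1)
  rw [show 2 * (n + 1) + 2 = 2 * n + 4 by ring] at h1
  qify at h1 h2 h3 h3' h4 ⊢
  apply mul_left_cancel₀ (show ((n : ℚ) + 2) * (n + 3) ≠ 0 by positivity)
  linear_combination ((n : ℚ) + 2) * h1 - 4 * ((n : ℚ) + 3) * h2 - 2 * ((n : ℚ) + 3) * h3
    + ((n : ℚ) + 2) * h3' + ((n : ℚ) + 3) * h4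

end Nat

theorem first_identity_of_closed_forms {K : Type*} [Field K] {t y u f fy up ft : K} (hu : u ≠ 0)
    (hu2 : 2 - u ≠ 0) (hw : u + y - y * u ≠ 0)
    (ht : t * u ^ 2 = u - 1)
    (hf : (2 - u) * (u + y - y * u) * f = u ^ 4)
    (hfy : (2 - u) * (1 - u) * f + (2 - u) * (u + y - y * u) * fy = 0)
    (hup : (2 - u) * up = u * (u - 1))
    (hft : up * ((2 - u) * (1 - y) - (u + y - y * u)) * f + (2 - u) * (u + y - y * u) * ft
      = 4 * u ^ 3 * up) :
    (y - 2) * y * (y + 2) * (3 * y + 2) * (t ^ 2 * fy) =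
      2 * (y - 1) * (ft - 2 * f + 2) + (y - 6) * (y - 2) * (t * (ft - f))
      + (3 * y ^ 2 - 2 * y + 4) * (t * f)
      - (3 * y ^ 3 + 18 * y ^ 2 - 20 * y + 24) * (t ^ 2 * f) - 4 * (y ^ 2 + 4) * (t ^ 2 * ft)
      + 8 * (y - 1) ^ 2 * (t ^ 2 * f ^ 2) - 32 * (y - 1) ^ 2 * (t ^ 3 * f ^ 2) := by
  have ht' : t = (u - 1) / u ^ 2 := by rw [eq_div_iff (by positivity)]; exact ht
  have hup' : up = u * (u - 1) / (2 - u) := by rw [eq_div_iff hu2]; linear_combination hup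
  have hf' : f = u ^ 4 / ((2 - u) * (u + y - y * u)) := by
    rw [eq_div_iff (mul_ne_zero hu2 hw)]; linear_combination hf
  have hfy' : fy = -((1 - u) * f) / (u + y - y * u) := by
    rw [eq_div_iff hw]; apply mul_left_cancel₀ hu2; linear_combination hfy
  have hft' : ft = (4 * u ^ 3 * up - up * ((2 - u) * (1 - y) - (u + y - y * u)) * f)
      / ((2 - u) * (u + y - y * u)) := by
    rw [eq_div_iff (mul_ne_zero hu2 hw)]; linear_combination hft
  subst ht' hfy' hft'
  subst hup' hf'
  field_simp
  ring

theorem coeff_a (k m : ℕ) :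
    (a k).coeff m = if m ≤ k then ((2 * k + 2 - m).choose (k - m) : ℚ) else 0 := by
  simp [a, finsetSum_coeff, coeff_X_pow]

theorem coeff_a_add (m j : ℕ) : (a (m + j)).coeff m = ((m + 2 * j + 2).choose j : ℚ) := by
  rw [coeff_a, if_pos (by omega), show 2 * (m + j) + 2 - m = m + 2 * j + 2 by omega,
    Nat.add_sub_cancel_left]

theorem coeff_a_of_lt {k m : ℕ} (h : k < m) : (a k).coeff m = 0 := by
  rw [coeff_a, if_neg (by omega)]

theorem coeff_a_pascal (n m : ℕ) :
    (a (n + 1)).coeff (m + 1) - (a (n + 1)).coeff (m + 2) - (a n).coeff m = 0 := by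
  obtain h | rfl | ⟨j, rfl⟩ : n < m ∨ m = n ∨ ∃ j, n = m + j + 1 := by
    rcases lt_trichotomy n m with h | h | h
    exacts [.inl h, .inr (.inl h.symm), .inr (.inr ⟨n - m - 1, by omega⟩)]
  · rw [coeff_a_of_lt (by omega), coeff_a_of_lt (by omega), coeff_a_of_lt h, sub_zero, sub_zero]
  · have h1 := coeff_a_add (m + 1) 0
    have h2 := coeff_a_add m 0
    simp only [add_zero, Nat.choose_zero_right, Nat.cast_one] at h1 h2
    rw [h1, h2, coeff_a_of_lt (show m + 1 < m + 2 by omega)]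
    ring
  · have h1 := coeff_a_add (m + 1) (j + 1)
    have h2 := coeff_a_add (m + 2) j
    have h3 := coeff_a_add m (j + 1)
    rw [show m + 1 + (j + 1) = m + j + 1 + 1 by ring] at h1
    rw [show m + 2 + j = m + j + 1 + 1 by ring] at h2
    rw [show m + (j + 1) = m + j + 1 by ring] at h3
    rw [h1, h2, h3, show m + 1 + 2 * (j + 1) + 2 = (m + 2 + 2 * j + 2) + 1 by ring,
      Nat.choose_succ_succ', show m + 2 * (j + 1) + 2 = m + 2 + 2 * j + 2 by ring]
    push_cast
    ring

theorem a_succ_pascal (n : ℕ) :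
    (X - 1) * a (n + 1) - X ^ 2 * a n =
      X * ((2 * n + 3).choose (n + 1) : ℚ[X]) - ((2 * n + 4).choose (n + 1) : ℚ[X]) := by
  have h0 : (a (n + 1)).coeff 0 = (2 * n + 4).choose (n + 1) := by
    simpa [show 2 * (n + 1) + 2 = 2 * n + 4 by ring] using coeff_a_add 0 (n + 1)
  have h1 : (a (n + 1)).coeff 1 = (2 * n + 3).choose n := by
    simpa [add_comm 1 n, show 1 + 2 * n + 2 = 2 * n + 3 by ring] using coeff_a_add 1 n
  ext m
  rcases m with _ | _ | m
  · simp [sub_mul, h0]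
  · simp only [sub_mul, one_mul, zero_add, coeff_sub, coeff_X_mul, h0, h1, coeff_X_pow_mul',
      Nat.not_ofNat_le_one, ↓reduceIte, sub_zero, coeff_mul_natCast, coeff_X_one,
      coeff_natCast_ite, one_ne_zero, CharP.cast_eq_zero]
    rw [show 2 * n + 4 = (2 * n + 3) + 1 by ring, Nat.choose_succ_succ']
    push_cast
    ring
  · simpa [sub_mul, coeff_X_mul, coeff_X_pow_mul', coeff_X] using coeff_a_pascal n m

local notation "𝕊" => PowerSeries ℚ[X]
local notation "T" => (PowerSeries.X : 𝕊)
local notation "Y" => (PowerSeries.C (X : ℚ[X]) : 𝕊)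
local notation "𝒜" => (PowerSeries.mk a : 𝕊)
local notation "𝒞" => PowerSeries.map (Nat.castRingHom ℚ[X]) PowerSeries.catalanSeries

noncomputable def binomSeries (r : ℕ) : 𝕊 := PowerSeries.mk fun n => ((2 * n + r).choose n : ℚ[X])

noncomputable def coeffDerivative : Derivation ℚ 𝕊 𝕊 := Polynomial.derivative'.mapPowerSeries

theorem constantCoeff_catalan : PowerSeries.constantCoeff 𝒞 = 1 := by
  simp [← PowerSeries.coeff_zero_eq_constantCoeff_apply]

theorem X_mul_catalan_sq : T * 𝒞 ^ 2 = 𝒞 - 1 := by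
  have h := congrArg (PowerSeries.map (Nat.castRingHom ℚ[X]))
    PowerSeries.catalanSeries_sq_mul_X_add_one
  simp only [map_add, map_mul, map_pow, PowerSeries.map_X, map_one] at h
  linear_combination h

theorem one_sub_four_X_mul_binomSeries_one : (1 - 4 * T) * binomSeries 1 = 2 - 𝒞 := by
  refine PowerSeries.ext fun n => ?_
  rcases n with _ | n
  all_goals simp only [← map_ofNat (PowerSeries.C (R := ℚ[X])), sub_mul, one_mul, mul_assoc,
    map_sub, PowerSeries.coeff_C_mul, PowerSeries.coeff_succ_X_mul, PowerSeries.coeff_zero_X_mul,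
    PowerSeries.coeff_C, binomSeries, PowerSeries.coeff_mk, PowerSeries.coeff_map,
    PowerSeries.catalanSeries_coeff, Nat.coe_castRingHom]
  · norm_num
  · have h := congrArg (Nat.cast : ℕ → ℚ[X]) (Nat.choose_two_mul_add_three_add_catalan n)
    push_cast at h ⊢
    rw [show 2 * (n + 1) + 1 = 2 * n + 3 by ring]
    linear_combination h

theorem X_mul_one_sub_four_X_mul_binomSeries_two :
    T * (1 - 4 * T) * binomSeries 2 = 2 * T * 𝒞 - 𝒞 + 1 := by
  refine PowerSeries.ext fun n => ?_
  rcases n with _ | _ | n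
  all_goals simp only [← map_ofNat (PowerSeries.C (R := ℚ[X])), mul_sub, sub_mul, mul_one,
    mul_assoc, map_sub, map_add, PowerSeries.coeff_C_mul, PowerSeries.coeff_succ_X_mul,
    PowerSeries.coeff_zero_X_mul, PowerSeries.coeff_one, binomSeries, PowerSeries.coeff_mk,
    PowerSeries.coeff_map, PowerSeries.catalanSeries_coeff, Nat.coe_castRingHom,
    mul_left_comm _ PowerSeries.X]
  · norm_num
  · norm_num
  · have h := congrArg (Nat.cast : ℕ → ℚ[X]) (Nat.choose_two_mul_add_four_add_catalan n)
    push_cast at h ⊢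
    rw [show 2 * (n + 1) + 2 = 2 * n + 4 by ring]
    linear_combination h

theorem pascal_aSeries : (Y - 1 - Y ^ 2 * T) * 𝒜 = Y * binomSeries 1 - binomSeries 2 := by
  refine PowerSeries.ext fun n => ?_
  rcases n with _ | n
  all_goals simp only [sub_mul, one_mul, mul_assoc, map_sub, PowerSeries.coeff_C_mul,
    PowerSeries.coeff_succ_X_mul, PowerSeries.coeff_zero_X_mul, binomSeries, PowerSeries.coeff_mk,
    ← map_pow]
  · simp [a]
  · rw [show 2 * (n + 1) + 1 = 2 * n + 3 by ring, show 2 * (n + 1) + 2 = 2 * n + 4 by ring,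
      ← a_succ_pascal n]
    ring

theorem aSeries_closed_form : (2 - 𝒞) * (𝒞 + Y - Y * 𝒞) * 𝒜 = 𝒞 ^ 4 := by
  have hT : T ≠ 0 := PowerSeries.X_ne_zero
  have h4 : 1 - 4 * T ≠ 0 := fun h => by simpa using congrArg PowerSeries.constantCoeff h
  have hE : Y - 1 - Y ^ 2 * T ≠ 0 := fun h => by
    simpa using X_sub_C_ne_zero (1 : ℚ) (by simpa using congrArg PowerSeries.constantCoeff h)
  apply mul_left_cancel₀ (mul_ne_zero (mul_ne_zero hT h4) hE)
  linear_combination (T * (1 - 4 * T) * ((2 - 𝒞) * (𝒞 + Y - Y * 𝒞))) * pascal_aSeries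
    + ((2 - 𝒞) * (𝒞 + Y - Y * 𝒞) * Y * T) * one_sub_four_X_mul_binomSeries_one
    - (2 - 𝒞) * (𝒞 + Y - Y * 𝒞) * X_mul_one_sub_four_X_mul_binomSeries_two
    -- the quotient of what remains by `T * 𝒞 ^ 2 - (𝒞 - 1)`
    + (-4 * T ^ 2 * 𝒞 ^ 2 * Y ^ 2 + T * 𝒞 ^ 2 * Y ^ 2 + 4 * T * 𝒞 ^ 2 * Y - 4 * T * 𝒞 ^ 2
      - 4 * T * 𝒞 * Y ^ 2 + 4 * T * Y ^ 2 - 𝒞 ^ 2 * Y + 𝒞 ^ 2 + 3 * 𝒞 * Y - 2 * 𝒞 - 2 * Y)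
      * X_mul_catalan_sq

theorem coeffDerivative_aSeries_closed_form :
    (2 - 𝒞) * (1 - 𝒞) * 𝒜 + (2 - 𝒞) * (𝒞 + Y - Y * 𝒞) * coeffDerivative 𝒜 = 0 := by
  have hC : coeffDerivative 𝒞 = 0 := by
    refine PowerSeries.ext fun n => ?_
    simp [coeffDerivative]
  have hY : coeffDerivative Y = 1 := by
    refine PowerSeries.ext fun n => ?_
    simp [coeffDerivative, PowerSeries.coeff_C, PowerSeries.coeff_one, apply_ite]
  have h := congrArg coeffDerivative aSeries_closed_form
  simp only [Derivation.leibniz, Derivation.leibniz_pow, map_sub, map_add, Derivation.map_ofNat,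
    hC, hY, smul_eq_mul] at h
  linear_combination h

theorem X_mul_derivative_catalan : (2 - 𝒞) * (T * d⁄dX ℚ[X] 𝒞) = 𝒞 * (𝒞 - 1) := by
  have h := congrArg (d⁄dX ℚ[X]) X_mul_catalan_sq
  simp only [Derivation.leibniz, Derivation.leibniz_pow, map_sub, Derivation.map_one_eq_zero,
    PowerSeries.derivative_X, smul_eq_mul] at h
  linear_combination (-(𝒞 * T)) * h + (𝒞 + 2 * (T * d⁄dX ℚ[X] 𝒞)) * X_mul_catalan_sq

theorem X_mul_derivative_aSeries_closed_form :
    (T * d⁄dX ℚ[X] 𝒞) * ((2 - 𝒞) * (1 - Y) - (𝒞 + Y - Y * 𝒞)) * 𝒜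
      + (2 - 𝒞) * (𝒞 + Y - Y * 𝒞) * (T * d⁄dX ℚ[X] 𝒜) = 4 * 𝒞 ^ 3 * (T * d⁄dX ℚ[X] 𝒞) := by
  have h := congrArg (d⁄dX ℚ[X]) aSeries_closed_form
  simp only [Derivation.leibniz, Derivation.leibniz_pow, map_sub, map_add, Derivation.map_ofNat,
    PowerSeries.derivative_C, smul_eq_mul] at h
  linear_combination T * h

/-- The constant `2` only corrects the coefficient of `T ^ 0`. -/
theorem aSeries_first_identity :
    PowerSeries.C ((X - 2) * X * (X + 2) * (3 * X + 2)) * (T ^ 2 * coeffDerivative 𝒜) =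
      PowerSeries.C (2 * (X - 1)) * (T * d⁄dX ℚ[X] 𝒜 - 2 * 𝒜 + 2)
      + PowerSeries.C ((X - 6) * (X - 2)) * (T * (T * d⁄dX ℚ[X] 𝒜 - 𝒜))
      + PowerSeries.C (3 * X ^ 2 - 2 * X + 4) * (T * 𝒜)
      - PowerSeries.C (3 * X ^ 3 + 18 * X ^ 2 - 20 * X + 24) * (T ^ 2 * 𝒜)
      - PowerSeries.C (4 * (X ^ 2 + 4)) * (T ^ 2 * (T * d⁄dX ℚ[X] 𝒜))
      + PowerSeries.C (8 * (X - 1) ^ 2) * (T ^ 2 * 𝒜 ^ 2)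
      - PowerSeries.C (32 * (X - 1) ^ 2) * (T ^ 3 * 𝒜 ^ 2) := by
  let φ := algebraMap 𝕊 (FractionRing 𝕊)
  have unit_ne_zero {f : 𝕊} (h : PowerSeries.constantCoeff f = 1) : φ f ≠ 0 :=
    (map_ne_zero_iff _ (IsFractionRing.injective _ _)).mpr fun hf => by simp [hf] at h
  have key := first_identity_of_closed_forms (t := φ T) (y := φ Y) (u := φ 𝒞)
    (f := φ 𝒜) (fy := φ (coeffDerivative 𝒜)) (up := φ (T * d⁄dX ℚ[X] 𝒞))
    (ft := φ (T * d⁄dX ℚ[X] 𝒜))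
    (unit_ne_zero constantCoeff_catalan)
    (by simpa only [map_sub, map_ofNat] using
      unit_ne_zero (f := 2 - 𝒞) (by rw [map_sub, constantCoeff_catalan, map_ofNat]; norm_num))
    (by simpa only [map_sub, map_add, map_mul] using
      unit_ne_zero (f := 𝒞 + Y - Y * 𝒞) (by simp [constantCoeff_catalan]))
    (by simpa only [map_sub, map_mul, map_pow, map_one] using congrArg φ X_mul_catalan_sq)
    (by simpa only [map_sub, map_add, map_mul, map_pow, map_ofNat] using
      congrArg φ aSeries_closed_form)
    (by simpa only [map_sub, map_add, map_mul, map_one, map_ofNat, map_zero] using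
      congrArg φ coeffDerivative_aSeries_closed_form)
    (by simpa only [map_sub, map_mul, map_one, map_ofNat] using
      congrArg φ X_mul_derivative_catalan)
    (by simpa only [map_sub, map_add, map_mul, map_pow, map_one, map_ofNat] using
      congrArg φ X_mul_derivative_aSeries_closed_form)
  apply IsFractionRing.injective 𝕊 (FractionRing 𝕊)
  simpa only [map_add, map_sub, map_mul, map_pow, map_ofNat, map_one] using key

theorem coeff_aSeries_sq (n : ℕ) : PowerSeries.coeff n (𝒜 ^ 2) = c n := by
  rw [sq, PowerSeries.coeff_mul, c, if_pos (Int.natCast_nonneg n), Int.toNat_natCast]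
  simp only [PowerSeries.coeff_mk]
  exact Finset.Nat.sum_antidiagonal_eq_sum_range_succ_mk _ _

theorem coeff_X_pow_three_mul_aSeries_sq (n : ℕ) :
    PowerSeries.coeff (n + 2) (T ^ 3 * 𝒜 ^ 2) = c (n - 1) := by
  rcases n with _ | n
  · simp [PowerSeries.coeff_X_pow_mul', c]
  · rw [show n + 1 + 2 = n + 3 by ring, PowerSeries.coeff_X_pow_mul, coeff_aSeries_sq]
    push_cast
    ring_nf

theorem stmt_4 (n : ℕ) :
    (X - 2) * X * (X + 2) * (3 * X + 2) * derivative (a n) =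
      2 * (n : ℚ[X]) * (X - 1) * a (n + 2)
      + ((n : ℚ[X]) * (X - 6) * (X - 2) + 3 * X ^ 2 - 2 * X + 4) * a (n + 1)
      - (3 * X ^ 3 + 18 * X ^ 2 - 20 * X + 24 + 4 * (n : ℚ[X]) * (X ^ 2 + 4)) * a n
      + 8 * (X - 1) ^ 2 * c (n : ℤ)
      - 32 * (X - 1) ^ 2 * c ((n : ℤ) - 1) := by
  have h := congrArg (PowerSeries.coeff (n + 2)) aSeries_first_identity
  simp only [← map_ofNat (PowerSeries.C (R := ℚ[X])), map_add (PowerSeries.coeff (R := ℚ[X]) _),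
    map_sub (PowerSeries.coeff (R := ℚ[X]) _), PowerSeries.coeff_C_mul,
    coeff_X_pow_three_mul_aSeries_sq, PowerSeries.coeff_X_pow_mul, PowerSeries.coeff_succ_X_mul,
    PowerSeries.coeff_X_mul_derivative, PowerSeries.coeff_derivative, PowerSeries.coeff_C,
    coeffDerivative, Derivation.coeff_mapPowerSeries, Polynomial.derivative'_apply,
    PowerSeries.coeff_mk, coeff_aSeries_sq] at h
  push_cast at h
  linear_combination h
end

section
/- For every natural number n ≥ 1, the following identity of polynomials in ℚ[x] holds: H_0(n−1, x)·H_0(n+1, x) = H_0(n, x)·H_2(n, x) + H_0(n, x)·H_{1²}(n, x) − H_1(n, x)². -/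
open Polynomial

/-- `H0 n` is the `(n+1)×(n+1)` Hankel determinant of the polynomials `a`. -/
noncomputable def H0 (n : ℕ) : ℚ[X] :=
  (Matrix.of fun i j : Fin (n + 1) => a (i.val + j.val)).det

/-- `H1 n`: the last column entries `a_{i+n}` are replaced by `a_{i+n+1}`. -/
noncomputable def H1 (n : ℕ) : ℚ[X] :=
  (Matrix.of fun i j : Fin (n + 1) =>
    if j.val = n then a (i.val + n + 1) else a (i.val + j.val)).det

/-- `H2 n`: the last column entries `a_{i+n}` are replaced by `a_{i+n+2}`. -/
noncomputable def H2 (n : ℕ) : ℚ[X] :=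
  (Matrix.of fun i j : Fin (n + 1) =>
    if j.val = n then a (i.val + n + 2) else a (i.val + j.val)).det

/-- `H11 n`: column `n-1` is replaced by `a_{i+n}` and column `n` by `a_{i+n+1}`. -/
noncomputable def H11 (n : ℕ) : ℚ[X] :=
  (Matrix.of fun i j : Fin (n + 1) =>
    if j.val = n then a (i.val + n + 1)
    else if j.val = n - 1 then a (i.val + n)
    else a (i.val + j.val)).det

/-!
The identity only involves the Hankel structure of the sequence `a`, so it suffices to prove it
for the generic sequence `b_k = X_k` over the fraction field of `ℤ[X₀, X₁, …]`. There the
Hankel determinant `H₀(n)` is nonzero (at `b_k = δ_{k,n}` the Hankel matrix is the reversal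
permutation matrix), so the shifted column `(b_{i+n+1})_i` equals `M α` for `M = [b_{i+j}]` and
some vector `α`. Cramer's rule then gives, with `ε = b_{2n+2} - ∑ⱼ αⱼ b_{n+1+j}`,
`H₁ = αₙ H₀`, `H_{1²} = -α_{n-1} H₀`, `H₂ = (α_{n-1} + αₙ²) H₀ + ε H₀(n-1)` and
`H₀(n+1) = ε H₀(n)`, from which the identity follows by substitution.
-/

namespace Matrix

variable {R : Type*} [CommRing R]

theorem det_updateCol_mulVec {ι : Type*} [Fintype ι] [DecidableEq ι]
    (A : Matrix ι ι R) (j : ι) (v : ι → R) :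
    (A.updateCol j (A *ᵥ v)).det = v j * A.det := by
  rw [← smul_eq_mul, ← det_updateCol_sum]
  congr with k
  simp only [mulVec, dotProduct, smul_eq_mul, mul_comm]

theorem det_updateCol_last_single {k : ℕ} (A : Matrix (Fin (k + 1)) (Fin (k + 1)) R) :
    (A.updateCol (Fin.last k) (Pi.single (Fin.last k) 1)).det =
      (A.submatrix Fin.castSucc Fin.castSucc).det := by
  rw [← det_transpose, ← updateRow_transpose, ← adjugate_apply,
    adjugate_fin_succ_eq_det_submatrix, Fin.succAbove_last, ← two_mul, pow_mul, neg_one_sq,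
    one_pow, one_mul, ← transpose_submatrix, det_transpose]

theorem det_updateCol_last_mulVec_add_single {k : ℕ}
    (A : Matrix (Fin (k + 1)) (Fin (k + 1)) R) (v : Fin (k + 1) → R) (e : R) :
    (A.updateCol (Fin.last k) (A *ᵥ v + e • Pi.single (Fin.last k) 1)).det =
      v (Fin.last k) * A.det + e * (A.submatrix Fin.castSucc Fin.castSucc).det := by
  rw [det_updateCol_add, det_updateCol_smul, det_updateCol_mulVec, det_updateCol_last_single]

end Matrix

open Matrix

variable {R : Type*}

def hankel (b : ℕ → R) (n : ℕ) : Matrix (Fin (n + 1)) (Fin (n + 1)) R :=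
  of fun i j => b (i + j : ℕ)

theorem hankel_submatrix_castSucc (b : ℕ → R) (n : ℕ) :
    (hankel b (n + 1)).submatrix Fin.castSucc Fin.castSucc = hankel b n := rfl

variable [CommRing R]

def hankelDet (b : ℕ → R) (n : ℕ) : R :=
  (hankel b n).det

def hankelDet₁ (b : ℕ → R) (n : ℕ) : R :=
  ((hankel b n).updateCol (Fin.last n) fun i => b (i.val + n + 1)).det

def hankelDet₂ (b : ℕ → R) (n : ℕ) : R :=
  ((hankel b n).updateCol (Fin.last n) fun i => b (i.val + n + 2)).det

def hankelDet₁₁ (b : ℕ → R) (n : ℕ) : R :=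
  (((hankel b n).updateCol ⟨n - 1, by omega⟩ fun i => b (i.val + n)).updateCol (Fin.last n)
    fun i => b (i.val + n + 1)).det

section

variable {b : ℕ → R} {m : ℕ} {α : Fin (m + 1) → R}

theorem hankelDet₁_eq (hα : hankel b m *ᵥ α = fun i => b (i.val + m + 1)) :
    hankelDet₁ b m = α (Fin.last m) * hankelDet b m := by
  rw [hankelDet₁, ← hα, det_updateCol_mulVec, hankelDet]

theorem hankel_mulVec_apply (v : Fin (m + 1) → R) (i : Fin (m + 1)) :
    (hankel b m *ᵥ v) i = ∑ j, v j * b (i + j) := by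
  simp only [mulVec, dotProduct, hankel, of_apply, mul_comm]

theorem hankel_succ_mulVec_snoc_zero (i : Fin (m + 2)) :
    (hankel b (m + 1) *ᵥ Fin.snoc α 0) i = ∑ j, α j * b (i + j) := by
  simp [hankel_mulVec_apply, Fin.sum_univ_castSucc]

theorem hankelDet_succ_eq (hα : hankel b m *ᵥ α = fun i => b (i.val + m + 1)) {ε : R}
    (hε : b (2 * m + 2) = ∑ j, α j * b (m + 1 + j) + ε) :
    hankelDet b (m + 1) = ε * hankelDet b m := by
  have hcol : (fun i => hankel b (m + 1) i (Fin.last (m + 1))) =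
      hankel b (m + 1) *ᵥ Fin.snoc α 0 + ε • Pi.single (Fin.last (m + 1)) 1 := by
    ext i
    rw [Pi.add_apply, hankel_succ_mulVec_snoc_zero, Pi.smul_apply]
    refine Fin.lastCases ?_ (fun i => ?_) i
    · simp [hankel, ← two_mul, mul_add, hε]
    · have hi := congrFun hα i
      rw [hankel_mulVec_apply] at hi
      simp [hankel, hi, add_assoc]
  rw [hankelDet, ← updateCol_eq_self (hankel b (m + 1)) (Fin.last (m + 1)), hcol,
    det_updateCol_last_mulVec_add_single, hankel_submatrix_castSucc, Fin.snoc_last, zero_mul,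
    zero_add, hankelDet]

theorem hankel_mulVec_shift (hα : hankel b m *ᵥ α = fun i => b (i.val + m + 1)) {ε : R}
    (hε : b (2 * m + 2) = ∑ j, α j * b (m + 1 + j) + ε) :
    hankel b m *ᵥ (Fin.cons 0 (fun j : Fin m => α j.castSucc) + α (Fin.last m) • α) +
      ε • Pi.single (Fin.last m) 1 = fun i => b (i.val + m + 2) := by
  ext i
  -- `hα` at rows `i` and `i + 1`: `b_{i+m+2} = ∑_{j<m} α_j b_{i+j+1} + α_m b_{i+m+1}`
  have hrow : (hankel b m *ᵥ (Fin.cons 0 (fun j : Fin m => α j.castSucc) + α (Fin.last m) • α)) i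
      = ∑ j, α j * b (i + 1 + j) := by
    rw [mulVec_add, mulVec_smul, Pi.add_apply, Pi.smul_apply, congrFun hα i,
      hankel_mulVec_apply, Fin.sum_univ_succ, Fin.sum_univ_castSucc]
    simp only [Fin.cons_zero, Fin.cons_succ, Fin.val_succ, Fin.val_castSucc, Fin.val_last,
      zero_mul, zero_add]
    ring_nf
  rw [Pi.add_apply, hrow]
  refine Fin.lastCases ?_ (fun i => ?_) i
  · rw [Pi.smul_apply, Pi.single_eq_same, smul_eq_mul, mul_one, Fin.val_last,
      show m + m + 2 = 2 * m + 2 by ring, hε]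
  · have hi := congrFun hα i.succ
    rw [hankel_mulVec_apply, Fin.val_succ] at hi
    rw [Pi.smul_apply, Pi.single_eq_of_ne (Fin.castSucc_lt_last i).ne, smul_zero, add_zero,
      Fin.val_castSucc, hi]
    congr 1
    omega

end

section

variable {b : ℕ → R} {n : ℕ} {α : Fin (n + 2) → R}

theorem hankelDet₂_eq (hα : hankel b (n + 1) *ᵥ α = fun i => b (i.val + (n + 1) + 1)) {ε : R}
    (hε : b (2 * (n + 1) + 2) = ∑ j, α j * b (n + 1 + 1 + j) + ε) :
    hankelDet₂ b (n + 1) = (α (Fin.last n).castSucc + α (Fin.last (n + 1)) ^ 2) *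
      hankelDet b (n + 1) + ε * hankelDet b n := by
  rw [hankelDet₂, ← hankel_mulVec_shift hα hε, det_updateCol_last_mulVec_add_single,
    hankel_submatrix_castSucc, ← Fin.succ_last]
  simp [sq, hankelDet]

theorem hankelDet₁₁_eq (hα : hankel b (n + 1) *ᵥ α = fun i => b (i.val + (n + 1) + 1)) :
    hankelDet₁₁ b (n + 1) = -(α (Fin.last n).castSucc * hankelDet b (n + 1)) := by
  -- swapping the last two columns turns this into a determinant of the form `H₁`
  set σ := Equiv.swap (Fin.last n).castSucc (Fin.last (n + 1))
  have hM : ((hankel b (n + 1)).updateCol ⟨n + 1 - 1, by omega⟩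
      (fun i => b (i.val + (n + 1)))).updateCol (Fin.last (n + 1)) (hankel b (n + 1) *ᵥ α) =
      ((hankel b (n + 1)).submatrix id σ).updateCol (Fin.last (n + 1))
        ((hankel b (n + 1)).submatrix id σ *ᵥ (α ∘ σ)) := by
    rw [submatrix_mulVec_equiv, Equiv.symm_swap, Function.comp_assoc, ← Equiv.Perm.coe_mul,
      Equiv.swap_mul_self, Equiv.Perm.coe_one, Function.comp_id]
    ext i j
    simp only [updateCol_apply, submatrix_apply, id, σ, Equiv.swap_apply_def]
    split_ifs <;> simp_all [Fin.ext_iff, hankel]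
  rw [hankelDet₁₁, ← hα, hM, det_updateCol_mulVec, det_permute',
    Equiv.Perm.sign_swap (Fin.castSucc_lt_last _).ne]
  simp [σ, hankelDet]

theorem hankelDet_mul_hankelDet_add_two_of_mulVec_eq
    (hα : hankel b (n + 1) *ᵥ α = fun i => b (i.val + (n + 1) + 1)) :
    hankelDet b n * hankelDet b (n + 2) = hankelDet b (n + 1) * hankelDet₂ b (n + 1) +
      hankelDet b (n + 1) * hankelDet₁₁ b (n + 1) - hankelDet₁ b (n + 1) ^ 2 := by
  have hε : b (2 * (n + 1) + 2) = ∑ j, α j * b (n + 1 + 1 + j) +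
      (b (2 * (n + 1) + 2) - ∑ j, α j * b (n + 1 + 1 + j)) := by ring
  rw [hankelDet_succ_eq hα hε, hankelDet₂_eq hα hε, hankelDet₁₁_eq hα, hankelDet₁_eq hα]
  ring

end

theorem hankelDet_mul_hankelDet_add_two_of_ne_zero {K : Type*} [Field K] (b : ℕ → K) (n : ℕ)
    (h : hankelDet b (n + 1) ≠ 0) :
    hankelDet b n * hankelDet b (n + 2) = hankelDet b (n + 1) * hankelDet₂ b (n + 1) +
      hankelDet b (n + 1) * hankelDet₁₁ b (n + 1) - hankelDet₁ b (n + 1) ^ 2 := by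
  refine hankelDet_mul_hankelDet_add_two_of_mulVec_eq
    (α := (hankel b (n + 1))⁻¹ *ᵥ fun i => b (i.val + (n + 1) + 1)) ?_
  rw [mulVec_mulVec, mul_nonsing_inv _ (isUnit_iff_ne_zero.mpr h), one_mulVec]

section Map

variable {S : Type*} [CommRing S] (f : R →+* S) (b : ℕ → R) (n : ℕ)

theorem RingHom.map_hankelDet : f (hankelDet b n) = hankelDet (f ∘ b) n := by
  rw [hankelDet, f.map_det]
  rfl

theorem RingHom.map_hankelDet₁ : f (hankelDet₁ b n) = hankelDet₁ (f ∘ b) n := by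
  rw [hankelDet₁, f.map_det, RingHom.mapMatrix_apply, map_updateCol]
  rfl

theorem RingHom.map_hankelDet₂ : f (hankelDet₂ b n) = hankelDet₂ (f ∘ b) n := by
  rw [hankelDet₂, f.map_det, RingHom.mapMatrix_apply, map_updateCol]
  rfl

theorem RingHom.map_hankelDet₁₁ : f (hankelDet₁₁ b n) = hankelDet₁₁ (f ∘ b) n := by
  rw [hankelDet₁₁, f.map_det, RingHom.mapMatrix_apply, map_updateCol, map_updateCol]
  rfl

end Map

theorem hankel_single_eq_submatrix_revPerm (n : ℕ) :
    hankel (Pi.single n 1) n =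
      (1 : Matrix (Fin (n + 1)) (Fin (n + 1)) R).submatrix id Fin.revPerm := by
  ext i j
  simp only [hankel, of_apply, submatrix_apply, id, one_apply, Fin.revPerm_apply, Fin.ext_iff,
    Fin.val_rev, Pi.single_apply]
  have := i.isLt
  have := j.isLt
  split_ifs <;> first | rfl | omega

open MvPolynomial in
theorem hankelDet_X_ne_zero (n : ℕ) : hankelDet (X : ℕ → MvPolynomial ℕ ℤ) n ≠ 0 := by
  intro h
  have := congrArg (eval (Pi.single n 1)) h
  rw [RingHom.map_hankelDet, hankelDet, map_zero] at this
  have hX : ⇑(eval (Pi.single n (1 : ℤ))) ∘ X = Pi.single n 1 := funext fun _ => eval_X _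
  rw [hX, hankel_single_eq_submatrix_revPerm, det_permute', det_one, mul_one] at this
  simp at this

open MvPolynomial in
theorem hankelDet_mul_hankelDet_add_two_X (n : ℕ) :
    hankelDet (X : ℕ → MvPolynomial ℕ ℤ) n * hankelDet X (n + 2) =
      hankelDet X (n + 1) * hankelDet₂ X (n + 1) + hankelDet X (n + 1) * hankelDet₁₁ X (n + 1) -
        hankelDet₁ X (n + 1) ^ 2 := by
  let f := algebraMap (MvPolynomial ℕ ℤ) (FractionRing (MvPolynomial ℕ ℤ))
  have hf : Function.Injective f := IsFractionRing.injective _ _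
  apply hf
  simp only [map_sub, map_add, map_mul, map_pow, f.map_hankelDet, f.map_hankelDet₁,
    f.map_hankelDet₂, f.map_hankelDet₁₁]
  refine hankelDet_mul_hankelDet_add_two_of_ne_zero _ n ?_
  rw [← f.map_hankelDet, map_ne_zero_iff f hf]
  exact hankelDet_X_ne_zero (n + 1)

theorem hankelDet_mul_hankelDet_add_two (b : ℕ → R) (n : ℕ) :
    hankelDet b n * hankelDet b (n + 2) =
      hankelDet b (n + 1) * hankelDet₂ b (n + 1) + hankelDet b (n + 1) * hankelDet₁₁ b (n + 1) -
        hankelDet₁ b (n + 1) ^ 2 := by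
  let f := MvPolynomial.eval₂Hom (Int.castRingHom R) b
  have hfX : f ∘ MvPolynomial.X = b := funext fun k => MvPolynomial.eval₂Hom_X' _ _ k
  have := congrArg f (hankelDet_mul_hankelDet_add_two_X n)
  simpa only [map_sub, map_add, map_mul, map_pow, f.map_hankelDet, f.map_hankelDet₁,
    f.map_hankelDet₂, f.map_hankelDet₁₁, hfX] using this

theorem H1_eq_hankelDet₁ (n : ℕ) : H1 n = hankelDet₁ a n := by
  rw [H1, hankelDet₁]
  congr 1
  ext i j
  simp [updateCol_apply, Fin.ext_iff, hankel]

theorem H2_eq_hankelDet₂ (n : ℕ) : H2 n = hankelDet₂ a n := by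
  rw [H2, hankelDet₂]
  congr 1
  ext i j
  simp [updateCol_apply, Fin.ext_iff, hankel]

theorem H11_eq_hankelDet₁₁ (n : ℕ) : H11 n = hankelDet₁₁ a n := by
  rw [H11, hankelDet₁₁]
  congr 1
  ext i j
  simp [updateCol_apply, Fin.ext_iff, hankel]

theorem stmt_7 (n : ℕ) (hn : 1 ≤ n) :
    H0 (n - 1) * H0 (n + 1) = H0 n * H2 n + H0 n * H11 n - (H1 n) ^ 2 := by
  obtain ⟨m, rfl⟩ : ∃ m, n = m + 1 := ⟨n - 1, by omega⟩
  rw [H1_eq_hankelDet₁, H2_eq_hankelDet₂, H11_eq_hankelDet₁₁]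
  exact hankelDet_mul_hankelDet_add_two a m
end

section
/- For every natural number n, det [ 4^{i+j+1} − C(2(i+j)+3, i+j+1) ]_{0 ≤ i,j ≤ n} = (−1)^n · (2n² + 4n + 1). Equivalently, since a_k(2) = 4^{k+1} − C(2k+3, k+1), the Hankel determinant H_n(x) evaluated at x = 2 equals (−1)^n (2n² + 4n + 1). -/
open Polynomial

/-- `H n` is the `(n+1)×(n+1)` Hankel determinant of the polynomials `a`. -/
noncomputable def H (n : ℕ) : ℚ[X] :=
  (Matrix.of fun i j : Fin (n + 1) => a (i.val + j.val)).det

/-!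
For fixed `r`, both sides of `∑_{m ≤ k} C(r+k-m, k-m) 2^m = ∑_{s ≤ k} C(r+k+1, s)` satisfy
`f (k+1) = 2 f k + C(r+k+1, k+1)`; at `r = k+2` this gives `a_k(2) = 4^{k+1} - C(2k+3, k+1)`.
So both claims concern `M = u w - N`, where `N` is the Hankel matrix of `C(2m+3, m+1)`,
`u i = 4^i` and `w j = 4^{j+1}`. By the Schur complement,
`det M = (-1)^{n+1} det [[N, u], [w, 1]]`.

Folding Vandermonde's identity about the middle gives `N = X T` with `X i k = C(2i+1, i+1+k)`
unitriangular and `T k j = C(2j+3, j+2+k)`, and `T = L U` with `L` unit lower bidiagonal and `U`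
upper triangular with diagonal `(2k+3)/(2k+1)`. Moreover `u = X 1 = X L v` with
`v t = (t+1)/(2t+1)`, and since the columns of `T` sum to `4^{j+1}` except that the last misses
`C(2n+3, 2n+3) = 1`, `w = r U` for `r = 1ᵀ L + e_n / U n n`. This gives a block LU factorization
of `[[N, u], [w, 1]]` with pivot `1 - r v = -(2n²+4n+1)/(2n+3)`, and `det U = 2n+3`.
-/

open Finset

theorem sum_range_choose_succ (N k : ℕ) :
    ∑ s ∈ range (k + 1), (N + 1).choose s = 2 * ∑ s ∈ range k, N.choose s + N.choose k := by
  induction k with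
  | zero => simp
  | succ k ih =>
    rw [sum_range_succ, ih, Nat.choose_succ_succ', sum_range_succ]
    ring

theorem sum_choose_mul_two_pow (r k : ℕ) :
    ∑ m ∈ range (k + 1), (r + k - m).choose (k - m) * 2 ^ m
      = ∑ s ∈ range (k + 1), (r + k + 1).choose s := by
  induction k with
  | zero => simp
  | succ k ih =>
    have hshift : ∀ m ∈ range (k + 1),
        (r + (k + 1) - (m + 1)).choose (k + 1 - (m + 1)) * 2 ^ (m + 1)
          = 2 * ((r + k - m).choose (k - m) * 2 ^ m) := fun m _ => by
      rw [show r + (k + 1) - (m + 1) = r + k - m by omega, show k + 1 - (m + 1) = k - m by omega]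
      ring
    rw [sum_range_succ', sum_congr rfl hshift, ← mul_sum, ih,
      show r + (k + 1) + 1 = (r + k + 1) + 1 by ring, sum_range_choose_succ (r + k + 1)]
    simp [show r + (k + 1) = r + k + 1 by ring]

theorem cast_choose_succ_mul {R : Type*} [CommRing R] (N m : ℕ) :
    (N.choose (m + 1) : R) * (m + 1) = N.choose m * (N - m) := by
  rcases le_or_gt m N with h | h
  · exact_mod_cast congrArg (Nat.cast : ℕ → R) (Nat.choose_succ_right_eq N m) |>.trans
      (by push_cast [h]; ring)
  · simp [Nat.choose_eq_zero_of_lt h, Nat.choose_eq_zero_of_lt (Nat.lt_succ_of_lt h)]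

theorem choose_two_mul_add_one_eq_zero {m k : ℕ} (hk : m + 1 ≤ k) :
    (2 * m + 1).choose (m + 1 + k) = 0 :=
  Nat.choose_eq_zero_of_lt (by omega)

theorem choose_two_mul_add_one_symm {m k : ℕ} (hk : k ≤ m) :
    (2 * m + 1).choose (m + 1 + k) = (2 * m + 1).choose (m - k) :=
  Nat.choose_symm_of_eq_add (by omega)

theorem sum_range_choose_upper_half {m N : ℕ} (hN : m + 1 ≤ N) :
    ∑ k ∈ range N, (2 * m + 1).choose (m + 1 + k) = 4 ^ m := by
  rw [eventually_constant_sum (fun k hk => choose_two_mul_add_one_eq_zero hk) hN,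
    ← Nat.sum_range_choose_halfway, ← sum_range_reflect (fun i => (2 * m + 1).choose i)]
  exact sum_congr rfl fun k hk => by
    rw [choose_two_mul_add_one_symm (by simp at hk; omega), Nat.add_sub_cancel]

/-- Vandermonde's identity for `(2p+1) + (2q+1)`: the terms below the middle of the first row
mirror those above it. -/
theorem two_mul_sum_choose_mul_choose (p q : ℕ) :
    2 * ∑ k ∈ range (p + 1), (2 * p + 1).choose (p + 1 + k) * (2 * q + 1).choose (q + 1 + k)
      = (2 * p + 2 * q + 2).choose (p + q + 1) := by
  set g : ℕ → ℕ := fun k => (2 * p + 1).choose (p + 1 + k) * (2 * q + 1).choose (q + 1 + k)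
  have hg : ∀ N, min p q + 1 ≤ N →
      ∑ k ∈ range N, g k = ∑ k ∈ range (min p q + 1), g k :=
    fun N hN => eventually_constant_sum (fun k hk => by
      rcases le_total p q with h | h
      · simp [g, choose_two_mul_add_one_eq_zero (show p + 1 ≤ k by omega)]
      · simp [g, choose_two_mul_add_one_eq_zero (show q + 1 ≤ k by omega)]) hN
  have hlow : ∑ a ∈ range (p + 1), (2 * p + 1).choose a * (2 * q + 1).choose (p + q + 1 - a)
      = ∑ k ∈ range (p + 1), g k := by
    rw [← sum_range_reflect]
    refine sum_congr rfl fun k hk => ?_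
    simp only [mem_range] at hk
    rw [show p + q + 1 - (p + 1 - 1 - k) = q + 1 + k by omega, show p + 1 - 1 - k = p - k by omega,
      ← choose_two_mul_add_one_symm (by omega : k ≤ p)]
  have hhigh : ∑ k ∈ range (q + 1),
      (2 * p + 1).choose (p + 1 + k) * (2 * q + 1).choose (p + q + 1 - (p + 1 + k))
        = ∑ k ∈ range (q + 1), g k := by
    refine sum_congr rfl fun k hk => ?_
    simp only [mem_range] at hk
    rw [show p + q + 1 - (p + 1 + k) = q - k by omega,
      ← choose_two_mul_add_one_symm (by omega : k ≤ q)]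
  rw [show 2 * p + 2 * q + 2 = (2 * p + 1) + (2 * q + 1) by ring, Nat.add_choose_eq,
    Nat.sum_antidiagonal_eq_sum_range_succ
      (fun a b => (2 * p + 1).choose a * (2 * q + 1).choose b),
    Nat.succ_eq_add_one, show p + q + 1 + 1 = (p + 1) + (q + 1) by ring,
    sum_range_add (fun a => (2 * p + 1).choose a * (2 * q + 1).choose (p + q + 1 - a)),
    hlow, hhigh, hg (p + 1) (by omega), hg (q + 1) (by omega)]
  ring

theorem prod_range_two_mul_add_three_div (n : ℕ) :
    ∏ i ∈ range n, ((2 * i + 3 : ℚ) / (2 * i + 1)) = 2 * n + 1 := by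
  induction n with
  | zero => simp
  | succ n ih =>
    rw [prod_range_succ, ih]
    push_cast
    field_simp
    ring

theorem eval_a_two (k : ℕ) : (a k).eval 2 = 4 ^ (k + 1) - ((2 * k + 3).choose (k + 1) : ℚ) := by
  have h := sum_choose_mul_two_pow (k + 2) k
  rw [show k + 2 + k + 1 = 2 * (k + 1) + 1 by ring] at h
  have hhalf := Nat.sum_range_choose_halfway (k + 1)
  rw [sum_range_succ, ← h] at hhalf
  have hrw : ∀ m ∈ range (k + 1), (k + 2 + k - m).choose (k - m) * 2 ^ m
      = (2 * k + 2 - m).choose (k - m) * 2 ^ m := fun m _ => by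
    rw [show k + 2 + k - m = 2 * k + 2 - m by omega]
  rw [sum_congr rfl hrw, show 2 * (k + 1) + 1 = 2 * k + 3 by ring] at hhalf
  rw [eq_sub_iff_add_eq]
  simp only [a, eval_finsetSum, eval_mul, eval_C, eval_pow, eval_X]
  exact_mod_cast hhalf

def natMatrix {R : Type*} (m p : ℕ) (f : ℕ → ℕ → R) : Matrix (Fin m) (Fin p) R :=
  Matrix.of fun i j => f i j

section natMatrix

variable {R : Type*} {m p q : ℕ}

theorem natMatrix_congr {f g : ℕ → ℕ → R} (h : ∀ i j, i < m → j < p → f i j = g i j) :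
    natMatrix m p f = natMatrix m p g :=
  Matrix.ext fun i j => h i j i.2 j.2

theorem natMatrix_add [Add R] (f g : ℕ → ℕ → R) :
    natMatrix m p f + natMatrix m p g = natMatrix m p (f + g) := rfl

theorem natMatrix_mul [NonUnitalNonAssocSemiring R] (f g : ℕ → ℕ → R) :
    natMatrix m p f * natMatrix p q g
      = natMatrix m q fun i j => ∑ k ∈ range p, f i k * g k j := by
  ext i j
  exact Fin.sum_univ_eq_sum_range (fun k => f i k * g k j) p

theorem det_natMatrix_of_upper [CommRing R] {f : ℕ → ℕ → R}
    (hf : ∀ i j, j < i → f i j = 0) :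
    (natMatrix m m f).det = ∏ i ∈ range m, f i i := by
  rw [Matrix.det_of_isUpperTriangular (M := natMatrix m m f) fun i j hij => hf i j hij]
  exact Fin.prod_univ_eq_prod_range (fun i => f i i) m

theorem det_natMatrix_of_lower [CommRing R] {f : ℕ → ℕ → R}
    (hf : ∀ i j, i < j → f i j = 0) :
    (natMatrix m m f).det = ∏ i ∈ range m, f i i := by
  rw [Matrix.det_of_isLowerTriangular (natMatrix m m f) fun i j hij => hf i j hij]
  exact Fin.prod_univ_eq_prod_range (fun i => f i i) m

end natMatrix

def binomX (i k : ℕ) : ℚ := (2 * i + 1).choose (i + 1 + k)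

def binomT (k j : ℕ) : ℚ := (2 * j + 3).choose (j + 2 + k)

def bidiagL (k t : ℕ) : ℚ :=
  (if t = k then 1 else 0) + (if t + 1 = k then (2 * t + 1 : ℚ) / (2 * t + 3) else 0)

def triU (t j : ℕ) : ℚ :=
  (t + 1 : ℚ) * (2 * j + 3) * (2 * j + 2).choose (j + 2 + t) / ((2 * t + 1) * (j + 1))

def vecV (t : ℕ) : ℚ := (t + 1 : ℚ) / (2 * t + 1)

theorem sum_binomX {i N : ℕ} (hi : i + 1 ≤ N) : ∑ k ∈ range N, binomX i k = 4 ^ i := by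
  simp only [binomX]
  exact_mod_cast sum_range_choose_upper_half hi

theorem sum_binomT {j N : ℕ} (hj : j + 2 ≤ N) :
    ∑ k ∈ range N, binomT k j = 4 ^ (j + 1) := by
  simp only [binomT, show 2 * j + 3 = 2 * (j + 1) + 1 by ring, show j + 2 = j + 1 + 1 by ring]
  exact_mod_cast sum_range_choose_upper_half hj

theorem sum_binomX_mul_binomT {i N : ℕ} (j : ℕ) (hi : i + 1 ≤ N) :
    ∑ k ∈ range N, binomX i k * binomT k j = (2 * (i + j) + 3).choose (i + j + 1) := by
  have hcentral : (2 * (i + j + 1) + 1 + 1).choose (i + j + 1 + 1)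
      = 2 * (2 * (i + j) + 3).choose (i + j + 1) := by
    rw [Nat.choose_succ_succ', Nat.choose_symm_half, ← two_mul]
    ring_nf
  have hfold := two_mul_sum_choose_mul_choose i (j + 1)
  rw [show 2 * i + 2 * (j + 1) + 2 = 2 * (i + j + 1) + 1 + 1 by ring,
    show i + (j + 1) + 1 = i + j + 1 + 1 by ring, hcentral] at hfold
  simp only [show 2 * (j + 1) + 1 = 2 * j + 3 by ring, show j + 1 + 1 = j + 2 by ring] at hfold
  rw [eventually_constant_sum
    (fun k hk => by simp [binomX, choose_two_mul_add_one_eq_zero hk]) hi]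
  simp only [binomX, binomT]
  exact_mod_cast Nat.eq_of_mul_eq_mul_left two_pos hfold

theorem sum_bidiagL_zero_mul {N : ℕ} (f : ℕ → ℚ) (hN : 0 < N) :
    ∑ t ∈ range N, bidiagL 0 t * f t = f 0 := by
  simp [bidiagL, hN]

theorem sum_bidiagL_succ_mul {k N : ℕ} (f : ℕ → ℚ) (hk : k + 1 < N) :
    ∑ t ∈ range N, bidiagL (k + 1) t * f t = f (k + 1) + (2 * k + 1) / (2 * k + 3) * f k := by
  simp [bidiagL, add_mul, sum_add_distrib, hk, show k < N by omega]

theorem triU_eq_zero {t j : ℕ} (h : j < t) : triU t j = 0 := by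
  simp [triU, Nat.choose_eq_zero_of_lt (show 2 * j + 2 < j + 2 + t by omega)]

theorem triU_self (j : ℕ) : triU j j = (2 * j + 3) / (2 * j + 1) := by
  rw [triU, show j + 2 + j = 2 * j + 2 by ring, Nat.choose_self]
  field_simp
  ring

theorem triU_zero (j : ℕ) : triU 0 j = binomT 0 j := by
  have hstep := cast_choose_succ_mul (R := ℚ) (2 * j + 2) (j + 1)
  rw [triU, binomT, show j + 2 + 0 = (j + 1) + 1 by ring, show 2 * j + 3 = (2 * j + 2) + 1 by ring,
    Nat.choose_succ_succ' (2 * j + 2)]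
  push_cast at hstep ⊢
  field_simp
  linear_combination hstep

theorem triU_succ_add (k j : ℕ) :
    triU (k + 1) j + (2 * k + 1) / (2 * k + 3) * triU k j = binomT (k + 1) j := by
  have hstep := cast_choose_succ_mul (R := ℚ) (2 * j + 2) (j + 2 + k)
  rw [triU, triU, binomT, show j + 2 + (k + 1) = (j + 2 + k) + 1 by ring,
    show 2 * j + 3 = (2 * j + 2) + 1 by ring, Nat.choose_succ_succ' (2 * j + 2)]
  push_cast at hstep ⊢
  field_simp
  linear_combination (2 * (k : ℚ) + 3) * hstep

theorem inv_triU_self_mul_triU {j n : ℕ} (hj : j ≤ n) :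
    (triU n n)⁻¹ * triU n j = binomT (n + 1) j := by
  rcases hj.lt_or_eq with hj | rfl
  · rw [triU_eq_zero hj, binomT, Nat.choose_eq_zero_of_lt (by omega)]
    simp
  · rw [binomT, show j + 2 + (j + 1) = 2 * j + 3 by ring, Nat.choose_self, inv_mul_cancel₀]
    · simp
    · rw [triU_self]
      positivity

theorem sum_bidiagL_mul_triU {k N : ℕ} (j : ℕ) (hk : k < N) :
    ∑ t ∈ range N, bidiagL k t * triU t j = binomT k j := by
  cases k with
  | zero => rw [sum_bidiagL_zero_mul _ hk, triU_zero]
  | succ k => rw [sum_bidiagL_succ_mul _ hk, triU_succ_add]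

theorem sum_bidiagL_mul_vecV {k N : ℕ} (hk : k < N) :
    ∑ t ∈ range N, bidiagL k t * vecV t = 1 := by
  cases k with
  | zero => simp [sum_bidiagL_zero_mul _ hk, vecV]
  | succ k =>
    rw [sum_bidiagL_succ_mul _ hk, vecV, vecV]
    push_cast
    field_simp
    ring

section HankelDeterminant

variable (n : ℕ)

theorem binomX_mul_binomT :
    natMatrix (n + 1) (n + 1) binomX * natMatrix (n + 1) (n + 1) binomT
      = natMatrix (n + 1) (n + 1) fun i j => ((2 * (i + j) + 3).choose (i + j + 1) : ℚ) := by
  rw [natMatrix_mul]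
  exact natMatrix_congr fun i j hi _ => sum_binomX_mul_binomT j hi

theorem binomX_mul_one :
    natMatrix (n + 1) (n + 1) binomX * natMatrix (n + 1) 1 (fun _ _ => (1 : ℚ))
      = natMatrix (n + 1) 1 fun i _ => (4 : ℚ) ^ i := by
  rw [natMatrix_mul]
  exact natMatrix_congr fun i _ hi _ => by simpa using sum_binomX hi

theorem bidiagL_mul_triU :
    natMatrix (n + 1) (n + 1) bidiagL * natMatrix (n + 1) (n + 1) triU
      = natMatrix (n + 1) (n + 1) binomT := by
  rw [natMatrix_mul]
  exact natMatrix_congr fun k j hk _ => sum_bidiagL_mul_triU j hk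

theorem bidiagL_mul_vecV :
    natMatrix (n + 1) (n + 1) bidiagL * natMatrix (n + 1) 1 (fun t _ => vecV t)
      = natMatrix (n + 1) 1 fun _ _ => (1 : ℚ) := by
  rw [natMatrix_mul]
  exact natMatrix_congr fun k _ hk _ => sum_bidiagL_mul_vecV hk

def rowR : Matrix (Fin 1) (Fin (n + 1)) ℚ :=
  natMatrix 1 (n + 1) (fun _ _ => (1 : ℚ)) * natMatrix (n + 1) (n + 1) bidiagL
    + natMatrix 1 (n + 1) fun _ t => if t = n then (triU n n)⁻¹ else 0

theorem rowR_mul_triU :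
    rowR n * natMatrix (n + 1) (n + 1) triU
      = natMatrix 1 (n + 1) fun _ j => (4 : ℚ) ^ (j + 1) := by
  rw [rowR, Matrix.add_mul, Matrix.mul_assoc, bidiagL_mul_triU, natMatrix_mul, natMatrix_mul,
    natMatrix_add]
  refine natMatrix_congr fun _ j _ hj => ?_
  simp only [Pi.add_apply, one_mul, ite_mul, zero_mul, sum_ite_eq', mem_range, lt_add_one, if_true]
  rw [inv_triU_self_mul_triU (by omega), ← sum_range_succ, sum_binomT (by omega)]

theorem rowR_mul_vecV :
    rowR n * natMatrix (n + 1) 1 (fun t _ => vecV t)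
      + natMatrix 1 1 (fun _ _ => -(2 * (n : ℚ) ^ 2 + 4 * n + 1) / (2 * n + 3)) = 1 := by
  rw [rowR, Matrix.add_mul, Matrix.mul_assoc, bidiagL_mul_vecV, natMatrix_mul, natMatrix_mul,
    natMatrix_add, natMatrix_add]
  ext i j
  fin_cases i; fin_cases j
  simp [natMatrix, triU_self, vecV]
  field_simp
  ring

theorem det_fromBlocks_hankel :
    (Matrix.fromBlocks
      (natMatrix (n + 1) (n + 1) fun i j => ((2 * (i + j) + 3).choose (i + j + 1) : ℚ))
      (natMatrix (n + 1) 1 fun i _ => (4 : ℚ) ^ i)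
      (natMatrix 1 (n + 1) fun _ j => (4 : ℚ) ^ (j + 1)) 1).det
      = -(2 * (n : ℚ) ^ 2 + 4 * n + 1) := by
  have hfactor := Matrix.fromBlocks_multiply
    (natMatrix (n + 1) (n + 1) binomX * natMatrix (n + 1) (n + 1) bidiagL) 0 (rowR n) 1
    (natMatrix (n + 1) (n + 1) triU) (natMatrix (n + 1) 1 fun t _ => vecV t) 0
    (natMatrix 1 1 fun _ _ => -(2 * (n : ℚ) ^ 2 + 4 * n + 1) / (2 * n + 3))
  simp only [Matrix.mul_zero, Matrix.zero_mul, Matrix.one_mul, add_zero, Matrix.mul_assoc,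
    bidiagL_mul_triU, bidiagL_mul_vecV, binomX_mul_binomT, binomX_mul_one, rowR_mul_triU,
    rowR_mul_vecV] at hfactor
  have hX : ∀ i k, i < k → binomX i k = 0 := fun i k h => by
    simp [binomX, Nat.choose_eq_zero_of_lt (show 2 * i + 1 < i + 1 + k by omega)]
  have hL : ∀ k t, k < t → bidiagL k t = 0 := fun k t h => by
    simp [bidiagL, show t ≠ k by omega, show t + 1 ≠ k by omega]
  rw [← hfactor, Matrix.det_mul, Matrix.det_fromBlocks_zero₁₂,
    Matrix.det_fromBlocks_zero₂₁, Matrix.det_mul, det_natMatrix_of_lower hX,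
    det_natMatrix_of_lower hL, det_natMatrix_of_upper fun t j h => triU_eq_zero h,
    Matrix.det_one, Matrix.det_fin_one]
  simp only [binomX, bidiagL, triU_self, show ∀ i, i + 1 + i = 2 * i + 1 from fun i => by ring,
    Nat.choose_self, if_true, show ∀ i : ℕ, i + 1 ≠ i from fun i => by omega, if_false]
  rw [prod_range_two_mul_add_three_div]
  simp [natMatrix]
  field_simp
  ring

theorem det_four_pow_sub_choose :
    (Matrix.of fun i j : Fin (n + 1) =>
        (4 : ℚ) ^ (i.val + j.val + 1)
          - ((2 * (i.val + j.val) + 3).choose (i.val + j.val + 1) : ℚ)).det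
      = (-1) ^ n * (2 * (n : ℚ) ^ 2 + 4 * (n : ℚ) + 1) := by
  have hM : (Matrix.of fun i j : Fin (n + 1) =>
        (4 : ℚ) ^ (i.val + j.val + 1)
          - ((2 * (i.val + j.val) + 3).choose (i.val + j.val + 1) : ℚ))
      = -((natMatrix (n + 1) (n + 1) fun i j => ((2 * (i + j) + 3).choose (i + j + 1) : ℚ))
        - natMatrix (n + 1) 1 (fun i _ => (4 : ℚ) ^ i)
          * natMatrix 1 (n + 1) fun _ j => (4 : ℚ) ^ (j + 1)) := by
    ext i j
    simp [natMatrix, Matrix.mul_apply, ← pow_add, add_assoc]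
  rw [hM, Matrix.det_neg, ← Matrix.det_fromBlocks_one₂₂, det_fromBlocks_hankel,
    Fintype.card_fin, pow_succ]
  ring

theorem eval_H_two :
    (H n).eval 2 = (Matrix.of fun i j : Fin (n + 1) =>
        (4 : ℚ) ^ (i.val + j.val + 1)
          - ((2 * (i.val + j.val) + 3).choose (i.val + j.val + 1) : ℚ)).det := by
  rw [H, ← coe_evalRingHom, RingHom.map_det]
  congr 1
  ext i j
  simp [eval_a_two, add_assoc]

end HankelDeterminant

theorem stmt_8 (n : ℕ) :
    (Matrix.of fun i j : Fin (n + 1) =>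
        (4 : ℚ) ^ (i.val + j.val + 1) - ((2 * (i.val + j.val) + 3).choose (i.val + j.val + 1) : ℚ)).det
      = (-1) ^ n * (2 * (n : ℚ) ^ 2 + 4 * (n : ℚ) + 1) ∧
    (H n).eval 2 = (-1) ^ n * (2 * (n : ℚ) ^ 2 + 4 * (n : ℚ) + 1) :=
  ⟨det_four_pow_sub_choose n, (eval_H_two n).trans (det_four_pow_sub_choose n)⟩
end

section
/- Let A, X₁, …, X_m be (n+1)×(n+1) matrices whose entries are polynomials in x over ℚ, with 1 ≤ m ≤ n, and define γ_A(X₁, …, X_m) = Σ_{S,σ} det(A_{S,σ}), the sum over all m-element subsets S of the column indices {0, …, n} and all permutations σ of {1, …, m}, where A_{S,σ} replaces column j_k of A by column j_k of X_{σ(k)}. Then the formal derivative satisfies (d/dx) γ_A(X₁, …, X_m) = γ_A(A', X₁, …, X_m) + Σ_{j=1}^{m} γ_A(X₁, …, X_{j−1}, X_j', X_{j+1}, …, X_m), where A' and X_j' denote entrywise formal derivatives. -/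
/-!
Differentiating `det M` column by column gives `∑_c det` of `M` with column `c` differentiated.
Apply this to each `A_{S,σ}`: a differentiated column `c ∉ S` is a column of `A'`, and the pair
`(ψ, c)` is exactly an injection `Fin (m+1) ↪ Fin (n+1)` sending `0 ↦ c`, so these terms add up to
`γ_A(A', X₁, …, X_m)`; a differentiated column `ψ l ∈ S` is a column of `X_l'`, giving the term
`γ_A(…, X_l', …)`.
-/

open Polynomial

/-- `A_{S,σ}` encoded via the injection `ψ`: column `ψ l` of `A` is replaced by
column `ψ l` of `Xs l`, for each `l`. -/
noncomputable def replaceCols {n m : ℕ} (A : Matrix (Fin (n + 1)) (Fin (n + 1)) ℚ[X])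
    (Xs : Fin m → Matrix (Fin (n + 1)) (Fin (n + 1)) ℚ[X]) (ψ : Fin m ↪ Fin (n + 1)) :
    Matrix (Fin (n + 1)) (Fin (n + 1)) ℚ[X] :=
  Matrix.of fun i j => if h : ∃ l, ψ l = j then Xs h.choose i j else A i j

/-- `γ_A(X₁, …, X_m) = Σ_{S,σ} det (A_{S,σ})`, the sum over all `m`-element subsets `S`
of the column indices and all permutations `σ` of `{1,…,m}` (equivalently, over all
injections `ψ : Fin m ↪ Fin (n+1)`). -/
noncomputable def gamma {n m : ℕ} (A : Matrix (Fin (n + 1)) (Fin (n + 1)) ℚ[X])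
    (Xs : Fin m → Matrix (Fin (n + 1)) (Fin (n + 1)) ℚ[X]) : ℚ[X] :=
  ∑ ψ : Fin m ↪ Fin (n + 1), (replaceCols A Xs ψ).det

theorem Matrix.derivative_det {R ι : Type*} [CommRing R] [Fintype ι] [DecidableEq ι]
    (M : Matrix ι ι R[X]) :
    derivative M.det = ∑ c, (M.updateCol c fun i => derivative (M i c)).det := by
  simp only [Matrix.det_apply', map_sum, derivative_mul, derivative_intCast, zero_mul, zero_add,
    derivative_prod_finset, Finset.mul_sum]
  rw [Finset.sum_comm]
  refine Fintype.sum_congr _ _ fun c => Fintype.sum_congr _ _ fun σ => ?_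
  have hprod : ∏ i, (M.updateCol c fun i => derivative (M i c)) (σ i) i
      = ∏ i, Function.update (fun i => M (σ i) i) c (derivative (M (σ c) c)) i := by
    refine Fintype.prod_congr _ _ fun i => ?_
    rcases eq_or_ne i c with rfl | hi <;> simp [*]
  rw [hprod, Finset.prod_update_of_mem (Finset.mem_univ c), ← Finset.erase_eq]
  ring

theorem Fintype.sum_eq_sum_compl_range_add {ι κ M : Type*} [Fintype ι] [DecidableEq ι]
    [Fintype κ] [AddCommMonoid M] (e : κ ↪ ι) (f : ι → M) :
    ∑ i, f i = ∑ i : {i // i ∉ Set.range e}, f i + ∑ k, f (e k) := by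
  rw [← Fintype.sum_subtype_add_sum_subtype (· ∈ Set.range e) f, add_comm]
  congr 1
  convert (Fintype.sum_equiv (Equiv.ofInjective e e.injective) (fun k => f (e k)) (fun i => f i)
    fun _ => rfl).symm

section replaceCols

variable {n m : ℕ} (A : Matrix (Fin (n + 1)) (Fin (n + 1)) ℚ[X])
  (Xs : Fin m → Matrix (Fin (n + 1)) (Fin (n + 1)) ℚ[X]) (ψ : Fin m ↪ Fin (n + 1))

theorem replaceCols_apply_embedding (i : Fin (n + 1)) (l : Fin m) :
    replaceCols A Xs ψ i (ψ l) = Xs l i (ψ l) := by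
  have h : ∃ l', ψ l' = ψ l := ⟨l, rfl⟩
  simp only [replaceCols, Matrix.of_apply, dif_pos h, ψ.injective h.choose_spec]

theorem replaceCols_apply_of_notMem_range {j : Fin (n + 1)} (hj : j ∉ Set.range ψ)
    (i : Fin (n + 1)) : replaceCols A Xs ψ i j = A i j :=
  dif_neg hj

theorem replaceCols_update (l : Fin m) (Y : Matrix (Fin (n + 1)) (Fin (n + 1)) ℚ[X]) :
    replaceCols A (Function.update Xs l Y) ψ
      = (replaceCols A Xs ψ).updateCol (ψ l) fun i => Y i (ψ l) := by
  refine Matrix.ext fun i j => ?_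
  by_cases hj : j ∈ Set.range ψ
  · obtain ⟨k, rfl⟩ := hj
    rcases eq_or_ne k l with rfl | hk
    · simp [replaceCols_apply_embedding]
    · rw [Matrix.updateCol_ne (ψ.injective.ne hk), replaceCols_apply_embedding,
        replaceCols_apply_embedding, Function.update_of_ne hk]
  · have hjl : j ≠ ψ l := fun h => hj ⟨l, h.symm⟩
    rw [Matrix.updateCol_ne hjl, replaceCols_apply_of_notMem_range _ _ _ hj,
      replaceCols_apply_of_notMem_range _ _ _ hj]

theorem replaceCols_cons (c : {c // c ∉ Set.range ψ})
    (Y : Matrix (Fin (n + 1)) (Fin (n + 1)) ℚ[X]) :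
    replaceCols A (Fin.cons Y Xs) ((Equiv.embeddingFinSucc m _).symm ⟨ψ, c⟩)
      = (replaceCols A Xs ψ).updateCol c fun i => Y i c := by
  set φ := (Equiv.embeddingFinSucc m _).symm ⟨ψ, c⟩
  have hφ : (φ : Fin (m + 1) → Fin (n + 1)) = Fin.cons c.1 ψ :=
    Equiv.coe_embeddingFinSucc_symm _
  refine Matrix.ext fun i j => ?_
  by_cases hj : j ∈ Set.range φ
  · obtain ⟨k, rfl⟩ := hj
    rw [replaceCols_apply_embedding]
    induction k using Fin.cases with
    | zero => simp [hφ]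
    | succ l =>
      have hl : φ l.succ = ψ l := by simp [hφ]
      rw [Fin.cons_succ, hl, Matrix.updateCol_ne (fun h => c.2 ⟨l, h⟩),
        replaceCols_apply_embedding]
  · have hjc : j ≠ c := fun h => hj ⟨0, by simp [hφ, h]⟩
    have hjψ : j ∉ Set.range ψ := fun ⟨l, hl⟩ => hj ⟨l.succ, by simp [hφ, hl]⟩
    rw [Matrix.updateCol_ne hjc, replaceCols_apply_of_notMem_range _ _ _ hj,
      replaceCols_apply_of_notMem_range _ _ _ hjψ]

theorem gamma_cons (Y : Matrix (Fin (n + 1)) (Fin (n + 1)) ℚ[X]) :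
    gamma A (Fin.cons Y Xs)
      = ∑ ψ : Fin m ↪ Fin (n + 1), ∑ c : {c // c ∉ Set.range ψ},
          ((replaceCols A Xs ψ).updateCol c fun i => Y i c).det := by
  rw [gamma, ← (Equiv.embeddingFinSucc m _).symm.sum_comp, Fintype.sum_sigma]
  simp only [replaceCols_cons]

end replaceCols

theorem stmt_15_general (n m : ℕ)
    (A : Matrix (Fin (n + 1)) (Fin (n + 1)) ℚ[X])
    (Xs : Fin m → Matrix (Fin (n + 1)) (Fin (n + 1)) ℚ[X]) :
    derivative (gamma A Xs)
      = gamma A (Fin.cons (A.map fun p => derivative p) Xs)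
        + ∑ j : Fin m, gamma A (Function.update Xs j ((Xs j).map fun p => derivative p)) := by
  have hupdate : ∑ j, gamma A (Function.update Xs j ((Xs j).map fun p => derivative p))
      = ∑ ψ : Fin m ↪ Fin (n + 1), ∑ l, ((replaceCols A Xs ψ).updateCol (ψ l)
          fun i => derivative (replaceCols A Xs ψ i (ψ l))).det := by
    simp only [gamma, replaceCols_update, replaceCols_apply_embedding, Matrix.map_apply]
    exact Finset.sum_comm
  rw [hupdate, gamma_cons, gamma, map_sum, ← Finset.sum_add_distrib]
  refine Fintype.sum_congr _ _ fun ψ => ?_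
  rw [Matrix.derivative_det, Fintype.sum_eq_sum_compl_range_add ψ]
  refine congrArg (· + _) (Fintype.sum_congr _ _ fun c => ?_)
  simp only [replaceCols_apply_of_notMem_range _ _ _ c.2, Matrix.map_apply]

/-- Differentiation rule for the γ-operator. -/
theorem stmt_15 (n m : ℕ) (hm1 : 1 ≤ m) (hm : m ≤ n)
    (A : Matrix (Fin (n + 1)) (Fin (n + 1)) ℚ[X])
    (Xs : Fin m → Matrix (Fin (n + 1)) (Fin (n + 1)) ℚ[X]) :
    derivative (gamma A Xs)
      = gamma A (Fin.cons (A.map fun p => derivative p) Xs)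
        + ∑ j : Fin m, gamma A (Function.update Xs j ((Xs j).map fun p => derivative p)) :=
  stmt_15_general n m A Xs
end

section
/- For every natural number n, det [ C(2(i+j)+2, i+j) ]_{0 ≤ i,j ≤ n} = (−1)^{n(n+1)/2}, where C(a,b) denotes the binomial coefficient and the determinant is taken over ℤ (or ℚ). -/
namespace Stmt16

open Finset Matrix

def fe (i t : ℕ) : ℤ := ((2*i+1).choose (i+1+t) : ℤ)

def ge (t s : ℕ) : ℤ :=
  if t = 0 ∧ s = 0 then 1 else if t = s + 1 ∨ s = t + 1 then 1 else 0

def le' (a k : ℕ) : ℤ := if a = k then 1 else if a = k + 1 then (-1)^k else 0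

lemma fe_eq_zero {i t : ℕ} (h : i < t) : fe i t = 0 := by
  unfold fe
  norm_cast
  apply Nat.choose_eq_zero_of_lt
  omega

lemma fe_symm {i t : ℕ} (h : t ≤ i) : fe i t = ((2*i+1).choose (i - t) : ℤ) := by
  unfold fe
  have h2 : i + 1 + t ≤ 2*i+1 := by omega
  rw [← Nat.choose_symm h2]
  congr 2
  omega

lemma fe_diag (i : ℕ) : fe i i = 1 := by
  rw [fe_symm (le_refl i)]
  simp

lemma ge_split (t s : ℕ) :
    ge t s = (if s = 0 then (if t = 0 then (1:ℤ) else 0) else 0)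
      + (if s = t - 1 then (if 1 ≤ t then (1:ℤ) else 0) else 0)
      + (if s = t + 1 then (1:ℤ) else 0) := by
  unfold ge
  split_ifs <;> omega

lemma key (n i j : ℕ) (hi : i ≤ n) (hj : j ≤ n) :
    ∑ t ∈ range (n+1), ∑ s ∈ range (n+1), fe i t * ge t s * fe j s
      = ((2*(i+j)+2).choose (i+j) : ℤ) := by
  -- evaluate LHS
  have hL : ∑ t ∈ range (n+1), ∑ s ∈ range (n+1), fe i t * ge t s * fe j s
      = fe i 0 * fe j 0 + (∑ u ∈ range n, fe i (u+1) * fe j u)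
        + (∑ u ∈ range n, fe i u * fe j (u+1)) := by
    have step1 : ∀ t ∈ range (n+1),
        ∑ s ∈ range (n+1), fe i t * ge t s * fe j s
          = fe i t * ((if t = 0 then (1:ℤ) else 0) * fe j 0
              + (if 1 ≤ t then (1:ℤ) else 0) * fe j (t-1) + fe j (t+1)) := by
      intro t ht
      simp only [mem_range] at ht
      have : ∀ s ∈ range (n+1), fe i t * ge t s * fe j s
          = (if s = 0 then fe i t * (if t = 0 then (1:ℤ) else 0) * fe j s else 0)
            + (if s = t - 1 then fe i t * (if 1 ≤ t then (1:ℤ) else 0) * fe j s else 0)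
            + (if s = t + 1 then fe i t * fe j s else 0) := by
        intro s _
        rw [ge_split]
        split_ifs <;> ring
      rw [Finset.sum_congr rfl this]
      rw [Finset.sum_add_distrib, Finset.sum_add_distrib]
      rw [Finset.sum_ite_eq' (range (n+1)) 0, Finset.sum_ite_eq' (range (n+1)) (t-1),
        Finset.sum_ite_eq' (range (n+1)) (t+1)]
      have h0 : (0 : ℕ) ∈ range (n+1) := by simp
      have h1 : t - 1 ∈ range (n+1) := by simp; omega
      rw [if_pos h0, if_pos h1]
      have h2 : (if t + 1 ∈ range (n+1) then fe i t * fe j (t+1) else 0)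
          = fe i t * fe j (t+1) := by
        by_cases h : t + 1 ∈ range (n+1)
        · rw [if_pos h]
        · rw [if_neg h]
          simp only [mem_range] at h
          have : n < t + 1 := by omega
          rw [fe_eq_zero (by omega : j < t + 1)]
          ring
      rw [h2]
      ring
    rw [Finset.sum_congr rfl step1]
    have expand : ∀ t : ℕ, fe i t * ((if t = 0 then (1:ℤ) else 0) * fe j 0
              + (if 1 ≤ t then (1:ℤ) else 0) * fe j (t-1) + fe j (t+1))
        = (if t = 0 then fe i 0 * fe j 0 else 0)
          + (fe i t * (if 1 ≤ t then (1:ℤ) else 0) * fe j (t-1))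
          + fe i t * fe j (t+1) := by
      intro t
      split_ifs with h h1 h1 <;> simp_all <;> ring
    rw [Finset.sum_congr rfl (fun t _ => expand t)]
    rw [Finset.sum_add_distrib, Finset.sum_add_distrib]
    rw [Finset.sum_ite_eq' (range (n+1)) 0 (fun _ => fe i 0 * fe j 0)]
    rw [if_pos (by simp : (0:ℕ) ∈ range (n+1))]
    have hA : ∑ t ∈ range (n+1), fe i t * (if 1 ≤ t then (1:ℤ) else 0) * fe j (t-1)
        = ∑ u ∈ range n, fe i (u+1) * fe j u := by
      rw [Finset.sum_range_succ']
      simp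
    have hB : ∑ t ∈ range (n+1), fe i t * fe j (t+1)
        = ∑ u ∈ range n, fe i u * fe j (u+1) := by
      rw [Finset.sum_range_succ]
      rw [fe_eq_zero (by omega : j < n + 1)]
      simp
    rw [hA, hB]
  rw [hL]
  -- Vandermonde on RHS
  have hv : (2*(i+j)+2).choose (i+j) = ((2*i+1) + (2*j+1)).choose (i+j) := by
    congr 1; omega
  rw [hv, Nat.add_choose_eq, Finset.Nat.sum_antidiagonal_eq_sum_range_succ_mk]
  push_cast
  have hsplit : (i + j).succ = (i+1) + j := by omega
  rw [hsplit, Finset.sum_range_add]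
  -- second part
  have hS2 : ∑ u ∈ range j, ((2*i+1).choose ((i+1) + u) : ℤ) * ((2*j+1).choose (i + j - ((i+1)+u)) : ℤ)
      = ∑ u ∈ range n, fe i u * fe j (u+1) := by
    have step : ∀ u ∈ range j, ((2*i+1).choose ((i+1) + u) : ℤ) * ((2*j+1).choose (i + j - ((i+1)+u)) : ℤ)
        = fe i u * fe j (u+1) := by
      intro u hu
      simp only [mem_range] at hu
      have e1 : fe i u = ((2*i+1).choose (i+1+u) : ℤ) := rfl
      have e2 : fe j (u+1) = ((2*j+1).choose (i + j - ((i+1)+u)) : ℤ) := by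
        rw [fe_symm (by omega : u + 1 ≤ j)]
        have harg : i + j - (i + 1 + u) = j - (u + 1) := by omega
        rw [harg]
      rw [e1, e2]
    rw [Finset.sum_congr rfl step]
    apply Finset.sum_subset (Finset.range_subset_range.mpr hj)
    intro u _ hu
    simp only [mem_range, not_lt] at hu
    rw [fe_eq_zero (by omega : j < u + 1)]
    ring
  -- first part
  have hS1 : ∑ k ∈ range (i+1), ((2*i+1).choose k : ℤ) * ((2*j+1).choose (i + j - k) : ℤ)
      = fe i 0 * fe j 0 + ∑ u ∈ range n, fe i (u+1) * fe j u := by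
    rw [← Finset.sum_range_reflect]
    have congr1 : ∀ t ∈ range (i+1),
        ((2*i+1).choose (i + 1 - 1 - t) : ℤ) * ((2*j+1).choose (i + j - (i + 1 - 1 - t)) : ℤ)
          = fe i t * ((2*j+1).choose (j + t) : ℤ) := by
      intro t ht
      simp only [mem_range] at ht
      have h1 : i + 1 - 1 - t = i - t := by omega
      have h2 : i + j - (i - t) = j + t := by omega
      rw [h1, h2, fe_symm (by omega : t ≤ i)]
    rw [Finset.sum_congr rfl congr1]
    rw [Finset.sum_range_succ']
    have t0 : fe i 0 * ((2*j+1).choose (j + 0) : ℤ) = fe i 0 * fe j 0 := by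
      congr 1
      have : fe j 0 = ((2*j+1).choose (j - 0) : ℤ) := fe_symm (by omega)
      rw [this]
      norm_num
    rw [t0]
    have congr2 : ∀ u ∈ range i,
        fe i (u+1) * ((2*j+1).choose (j + (u+1)) : ℤ) = fe i (u+1) * fe j u := by
      intro u hu
      congr 1
      unfold fe
      congr 2
      omega
    rw [Finset.sum_congr rfl congr2]
    have ext1 : ∑ u ∈ range i, fe i (u+1) * fe j u = ∑ u ∈ range n, fe i (u+1) * fe j u := by
      rw [Finset.sum_subset (Finset.range_subset_range.mpr hi)]
      intro u _ hu
      simp only [mem_range, not_lt] at hu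
      rw [fe_eq_zero (by omega : i < u + 1)]
      ring
    rw [ext1]
    ring
  rw [hS1, hS2]

lemma sum_single (N m : ℕ) (hm : m < N) (f : ℕ → ℤ) (h : ∀ k < N, k ≠ m → f k = 0) :
    ∑ k ∈ range N, f k = f m := by
  apply Finset.sum_eq_single_of_mem m (by simp [hm])
  intro k hk hne
  exact h k (mem_range.mp hk) hne

lemma sum_two (N m : ℕ) (hm : m + 1 < N) (f : ℕ → ℤ)
    (h : ∀ k < N, k ≠ m → k ≠ m + 1 → f k = 0) :
    ∑ k ∈ range N, f k = f m + f (m+1) := by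
  rw [← Finset.sum_pair (by omega : m ≠ m + 1)]
  symm
  apply Finset.sum_subset
  · intro x hx
    simp only [mem_insert, mem_singleton] at hx
    simp only [mem_range]
    omega
  · intro x hx hx2
    simp only [mem_insert, mem_singleton, not_or] at hx2
    exact h x (mem_range.mp hx) hx2.1 hx2.2

lemma gl (n a b : ℕ) (ha : a ≤ n) (hb : b ≤ n) :
    ∑ k ∈ range (n+1), le' a k * (-1)^k * le' b k = ge a b := by
  have hzero : ∀ k, a ≠ k → a ≠ k + 1 → le' a k * (-1)^k * le' b k = 0 := by
    intro k h1 h2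
    unfold le'
    rw [if_neg h1, if_neg h2]
    ring
  have hzero' : ∀ k, b ≠ k → b ≠ k + 1 → le' a k * (-1)^k * le' b k = 0 := by
    intro k h1 h2
    unfold le'
    rw [if_neg h1, if_neg h2]
    ring
  rcases Nat.lt_trichotomy a b with h | h | h
  · -- a < b
    by_cases hb1 : b = a + 1
    · subst hb1
      rw [sum_single (n+1) a (by omega) _ (by
        intro k hk h1
        by_cases h2 : a = k + 1
        · exact hzero' k (by omega) (by omega)
        · exact hzero k (fun hh => h1 hh.symm) h2)]
      unfold le' ge
      rw [if_pos rfl, if_neg (by omega : ¬ a + 1 = a), if_pos rfl]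
      have : ¬ (a = 0 ∧ a + 1 = 0) := by omega
      rw [if_neg this, if_pos (by omega : a = (a+1) + 1 ∨ a + 1 = a + 1)]
      have h2 : ((-1:ℤ))^a * (-1)^a = 1 := by
        rw [← pow_add]
        exact Even.neg_one_pow ⟨a, rfl⟩
      linear_combination h2
    · -- b ≥ a + 2 : all zero
      rw [Finset.sum_eq_zero (by
        intro k hk
        rcases Nat.lt_trichotomy a k with hc | hc | hc
        · exact hzero k (by omega) (by omega)
        · exact hzero' k (by omega) (by omega)
        · by_cases h2 : a = k + 1
          · exact hzero' k (by omega) (by omega)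
          · exact hzero k (by omega) h2)]
      unfold ge
      rw [if_neg (by omega), if_neg (by omega)]
  · -- a = b
    subst h
    rcases Nat.eq_zero_or_pos a with h0 | h0
    · subst h0
      rw [sum_single (n+1) 0 (by omega) _ (by
        intro k hk h1
        exact hzero k (fun hh => h1 hh.symm) (by omega))]
      unfold le' ge
      norm_num
    · obtain ⟨m, rfl⟩ := Nat.exists_eq_add_of_lt h0
      simp only [Nat.zero_add] at *
      rw [sum_two (n+1) m (by omega) _ (by
        intro k hk h1 h2
        exact hzero k (fun hh => h2 hh.symm) (by omega))]
      unfold le' ge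
      rw [if_neg (by omega : ¬ m + 1 = m), if_pos rfl, if_pos rfl]
      rw [if_neg (by omega), if_neg (by omega)]
      have e : ((-1:ℤ))^m * (-1)^m = 1 := by
        rw [← pow_add]
        exact Even.neg_one_pow ⟨m, rfl⟩
      rw [pow_succ]
      linear_combination ((-1:ℤ))^m * e
  · -- b < a : symmetric
    by_cases ha1 : a = b + 1
    · subst ha1
      rw [sum_single (n+1) b (by omega) _ (by
        intro k hk h1
        by_cases h2 : b = k + 1
        · exact hzero k (by omega) (by omega)
        · exact hzero' k (fun hh => h1 hh.symm) h2)]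
      unfold le' ge
      rw [if_neg (by omega : ¬ b + 1 = b), if_pos rfl, if_pos rfl]
      rw [if_neg (by omega), if_pos (by omega : b + 1 = b + 1 ∨ b = (b+1) + 1)]
      have h2 : ((-1:ℤ))^b * (-1)^b = 1 := by
        rw [← pow_add]
        exact Even.neg_one_pow ⟨b, rfl⟩
      linear_combination h2
    · rw [Finset.sum_eq_zero (by
        intro k hk
        rcases Nat.lt_trichotomy b k with hc | hc | hc
        · exact hzero' k (by omega) (by omega)
        · exact hzero k (by omega) (by omega)
        · by_cases h2 : b = k + 1
          · exact hzero k (by omega) (by omega)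
          · exact hzero' k (by omega) h2)]
      unfold ge
      rw [if_neg (by omega), if_neg (by omega)]

end Stmt16

open Finset Matrix Stmt16 in
theorem stmt_16 (n : ℕ) :
    (Matrix.of fun i j : Fin (n + 1) =>
        (((2 * (i.val + j.val) + 2).choose (i.val + j.val) : ℤ))).det
      = (-1) ^ (n * (n + 1) / 2) := by
  classical
  set F : Matrix (Fin (n+1)) (Fin (n+1)) ℤ := Matrix.of fun i t => fe i.val t.val with hF
  set G : Matrix (Fin (n+1)) (Fin (n+1)) ℤ := Matrix.of fun t s => ge t.val s.val with hGdef
  set L : Matrix (Fin (n+1)) (Fin (n+1)) ℤ := Matrix.of fun a k => le' a.val k.val with hLdef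
  set D : Matrix (Fin (n+1)) (Fin (n+1)) ℤ := Matrix.diagonal (fun k => (-1)^(k.val)) with hDdef
  have hM : (Matrix.of fun i j : Fin (n + 1) =>
        (((2 * (i.val + j.val) + 2).choose (i.val + j.val) : ℤ))) = F * G * Fᵀ := by
    ext i j
    simp only [Matrix.mul_apply, Matrix.transpose_apply, Matrix.of_apply, hF, hGdef]
    rw [show (∑ s : Fin (n+1), (∑ t : Fin (n+1), fe i.val t.val * ge t.val s.val) * fe j.val s.val)
        = ∑ t : Fin (n+1), ∑ s : Fin (n+1), fe i.val t.val * ge t.val s.val * fe j.val s.val by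
      rw [Finset.sum_comm]
      apply Finset.sum_congr rfl
      intro s _
      rw [Finset.sum_mul]]
    rw [show (∑ t : Fin (n+1), ∑ s : Fin (n+1), fe i.val t.val * ge t.val s.val * fe j.val s.val)
        = ∑ t ∈ range (n+1), ∑ s ∈ range (n+1), fe i.val t * ge t s * fe j.val s by
      rw [← Fin.sum_univ_eq_sum_range (fun t => ∑ s ∈ range (n+1), fe i.val t * ge t s * fe j.val s)]
      apply Finset.sum_congr rfl
      intro t _
      exact Fin.sum_univ_eq_sum_range (fun s => fe i.val t.val * ge t.val s * fe j.val s) (n+1)]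
    exact (key n i.val j.val (by omega) (by omega)).symm
  have hG : G = L * D * Lᵀ := by
    have hLD : L * D = Matrix.of (fun a k => le' a.val k.val * (-1)^(k.val)) := by
      rw [hDdef]
      ext a k
      rw [Matrix.mul_diagonal]
      rfl
    rw [hLD]
    ext a b
    simp only [Matrix.mul_apply, Matrix.transpose_apply, Matrix.of_apply, hGdef, hLdef]
    rw [show (∑ k : Fin (n+1), le' a.val k.val * (-1)^(k.val) * le' b.val k.val)
        = ∑ k ∈ range (n+1), le' a.val k * (-1)^k * le' b.val k from
      Fin.sum_univ_eq_sum_range (fun k => le' a.val k * (-1)^k * le' b.val k) (n+1)]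
    exact (gl n a.val b.val (by omega) (by omega)).symm
  have hdetF : F.det = 1 := by
    rw [Matrix.det_of_lowerTriangular F (by
      intro i j hij
      simp only [OrderDual.toDual_lt_toDual] at hij
      exact fe_eq_zero (by exact_mod_cast hij))]
    simp [hF, fe_diag]
  have hdetL : L.det = 1 := by
    rw [Matrix.det_of_lowerTriangular L (by
      intro a k hk
      simp only [OrderDual.toDual_lt_toDual] at hk
      have : (a : ℕ) < (k : ℕ) := by exact_mod_cast hk
      simp only [hLdef, Matrix.of_apply]
      unfold le'
      rw [if_neg (by omega), if_neg (by omega)])]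
    simp [hLdef, le']
  have hdetD : D.det = (-1) ^ (n * (n + 1) / 2) := by
    rw [hDdef, Matrix.det_diagonal]
    rw [Fin.prod_univ_eq_prod_range (fun k => ((-1):ℤ)^k) (n+1)]
    rw [Finset.prod_pow_eq_pow_sum]
    congr 1
    have h2 : (∑ i ∈ range (n+1), i) * 2 = n * (n+1) := by
      rw [Finset.sum_range_id_mul_two, Nat.add_sub_cancel, Nat.mul_comm]
    omega
  rw [hM, Matrix.det_mul, Matrix.det_mul, hG, Matrix.det_mul, Matrix.det_mul,
    Matrix.det_transpose, Matrix.det_transpose, hdetF, hdetL, hdetD]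
  ring
end
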